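/- Let 0 < ȳ_min < ȳ_max, T > 0 and λ_max > 0 satisfy e^{a₁T} ȳ_min < ȳ_max and λ_max ≥ (a₂a₃/(g₁g₂)) · ȳ_min · (e^{a₁T} − 1). Then there exists λ ∈ [0, λ_max] such that ȳ_min ≤ λ ξ_T(τ) ≤ ȳ_max for all τ ∈ [0, T] (i.e., the 1-cycle with dose λ and period T keeps the output in the prescribed corridor). -/

import Mathlib

/-!
Put `x(t) = e^{tA} (I - e^{TA})⁻¹ B`, so that `ξ_T = x₃`, `x' = A x` and `x(T) = x(0) - B`.
The first component decays like `e^{-a₁t}` and drops by `1` over a period, which pins it between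
`m = 1 / (e^{a₁T} - 1)` and `e^{a₁T} m` on `[0, T]`. The other two components are `T`-periodic
solutions of `f' = h - b f` with `b > 0`, and such a solution stays between `inf h / b` and
`sup h / b`. Cascading, `ξ_T` lies between `L = g₁ g₂ m / (a₂ a₃)` and `e^{a₁T} L` on `[0, T]`,
so the dose `ȳ_min / L` works. The same comparison, applied to a fixed vector of `e^{TA}`,
shows that `I - e^{TA}` is invertible.
-/

open Matrix

/-- The system matrix of the third-order PK model. -/
noncomputable def Amat (a₁ a₂ a₃ g₁ g₂ : ℝ) : Matrix (Fin 3) (Fin 3) ℝ :=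
  !![-a₁, 0, 0; g₁, -a₂, 0; 0, g₂, -a₃]

/-- The input vector `B = (1,0,0)ᵀ`. -/
noncomputable def Bvec : Fin 3 → ℝ := ![1, 0, 0]

/-- The output map `C x = x₃`. -/
noncomputable def Cout (x : Fin 3 → ℝ) : ℝ := x 2

/-- `ξ_T(τ) = C e^{τA} (I − e^{TA})⁻¹ B`, the output at phase `τ` of the 1-cycle
with unit dose and inter-dose interval `T`. -/
noncomputable def xi (a₁ a₂ a₃ g₁ g₂ : ℝ) (T τ : ℝ) : ℝ :=
  Cout ((NormedSpace.exp (τ • Amat a₁ a₂ a₃ g₁ g₂) *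
    (1 - NormedSpace.exp (T • Amat a₁ a₂ a₃ g₁ g₂))⁻¹).mulVec Bvec)

open Set

lemma eq_mul_exp_of_hasDerivAt {f : ℝ → ℝ} {b : ℝ} (hf : ∀ t, HasDerivAt f (-b * f t) t)
    (t : ℝ) : f t = f 0 * Real.exp (-b * t) := by
  have hg : ∀ s, HasDerivAt (fun s => Real.exp (b * s) * f s) 0 s := fun s =>
    (((hasDerivAt_id' s).const_mul b).exp.mul (hf s)).congr_deriv (by ring)
  have hconst := is_const_of_deriv_eq_zero (fun s => (hg s).differentiableAt)
    (fun s => (hg s).deriv) t 0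
  simp only [mul_zero, Real.exp_zero, one_mul] at hconst
  rw [← hconst, mul_comm (Real.exp _), mul_assoc, ← Real.exp_add]
  simp

lemma div_le_of_hasDerivAt_of_periodic {f h : ℝ → ℝ} {b c T : ℝ} (hb : 0 < b) (hT : 0 < T)
    (hf : ∀ t, HasDerivAt f (h t - b * f t) t) (hper : f T = f 0)
    (hc : ∀ t ∈ Icc 0 T, c ≤ h t) : ∀ t ∈ Icc 0 T, c / b ≤ f t := by
  -- `g` is nondecreasing on `[0, T]`, and periodicity of `f` then forces `g 0 ≥ 0`
  set g : ℝ → ℝ := fun s => Real.exp (b * s) * (f s - c / b)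
  have hg : ∀ s, HasDerivAt g (Real.exp (b * s) * (h s - c)) s := fun s =>
    (((hasDerivAt_id' s).const_mul b).exp.mul ((hf s).sub_const (c / b))).congr_deriv
      (by field_simp; ring)
  have hmono : MonotoneOn g (Icc 0 T) :=
    monotoneOn_of_hasDerivWithinAt_nonneg (convex_Icc 0 T)
      (fun s _ => (hg s).continuousAt.continuousWithinAt) (fun s _ => (hg s).hasDerivWithinAt)
      (fun s hs => mul_nonneg (Real.exp_pos _).le
        (sub_nonneg.2 (hc s (interior_subset hs))))
  have h0 : 0 ≤ f 0 - c / b := by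
    have hle : g 0 ≤ g T := hmono ⟨le_rfl, hT.le⟩ ⟨hT.le, le_rfl⟩ hT.le
    have hgt : 1 < Real.exp (b * T) := Real.one_lt_exp_iff.2 (mul_pos hb hT)
    simp only [g, hper, mul_zero, Real.exp_zero, one_mul] at hle
    nlinarith
  intro t ht
  have hle : g 0 ≤ g t := hmono ⟨le_rfl, hT.le⟩ ht ht.1
  simp only [g, mul_zero, Real.exp_zero, one_mul] at hle
  exact sub_nonneg.1 (nonneg_of_mul_nonneg_right (h0.trans hle) (Real.exp_pos _))

lemma mem_Icc_div_of_hasDerivAt_of_periodic {f h : ℝ → ℝ} {b c d T : ℝ} (hb : 0 < b)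
    (hT : 0 < T) (hf : ∀ t, HasDerivAt f (h t - b * f t) t) (hper : f T = f 0)
    (hh : ∀ t ∈ Icc 0 T, h t ∈ Icc c d) : ∀ t ∈ Icc 0 T, f t ∈ Icc (c / b) (d / b) := by
  have hneg : ∀ t ∈ Icc 0 T, -d / b ≤ -f t :=
    div_le_of_hasDerivAt_of_periodic hb hT (fun t => ((hf t).neg).congr_deriv (by ring))
      (by rw [hper]) fun t ht => neg_le_neg (hh t ht).2
  intro t ht
  refine ⟨div_le_of_hasDerivAt_of_periodic hb hT hf hper (fun s hs => (hh s hs).1) t ht, ?_⟩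
  simpa [neg_div] using hneg t ht

lemma hasDerivAt_exp_smul_mulVec {n : Type*} [Fintype n] [DecidableEq n] (A : Matrix n n ℝ)
    (v : n → ℝ) (t : ℝ) :
    HasDerivAt (fun s : ℝ => NormedSpace.exp (s • A) *ᵥ v)
      (A *ᵥ (NormedSpace.exp (t • A) *ᵥ v)) t := by
  let : NormedRing (Matrix n n ℝ) := Matrix.linftyOpNormedRing
  let : NormedAlgebra ℝ (Matrix n n ℝ) := Matrix.linftyOpNormedAlgebra
  rw [mulVec_mulVec]
  exact (((mulVecBilin ℝ ℝ).flip v).toContinuousLinearMap.hasFDerivAt).comp_hasDerivAt t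
    (hasDerivAt_exp_smul_const' A t)

lemma mem_Icc_of_hasDerivAt_of_jump {f : ℝ → ℝ} {a T : ℝ} (ha : 0 < a) (hT : 0 < T)
    (hf : ∀ t, HasDerivAt f (-a * f t) t) (hjump : f T = f 0 - 1) :
    ∀ t ∈ Icc 0 T, f t ∈ Icc (Real.exp (a * T) - 1)⁻¹
      (Real.exp (a * T) * (Real.exp (a * T) - 1)⁻¹) := by
  have he : 0 < Real.exp (a * T) - 1 := sub_pos.2 (Real.one_lt_exp_iff.2 (mul_pos ha hT))
  have hf0 : f 0 = Real.exp (a * T) * (Real.exp (a * T) - 1)⁻¹ := by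
    rw [eq_mul_exp_of_hasDerivAt hf T, neg_mul, Real.exp_neg] at hjump
    field_simp [he.ne'] at hjump ⊢
    linear_combination -hjump
  intro t ht
  have hdecay : Real.exp (-a * t) ∈ Icc (Real.exp (a * T))⁻¹ 1 := by
    rw [← Real.exp_neg, ← Real.exp_zero]
    exact ⟨Real.exp_le_exp.2 (by nlinarith [ht.2]), Real.exp_le_exp.2 (by nlinarith [ht.1])⟩
  rw [eq_mul_exp_of_hasDerivAt hf t, hf0]
  constructor
  · calc (Real.exp (a * T) - 1)⁻¹
        = Real.exp (a * T) * (Real.exp (a * T) - 1)⁻¹ * (Real.exp (a * T))⁻¹ := by field_simp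
      _ ≤ _ := by gcongr; exact hdecay.1
  · exact mul_le_of_le_one_right (by positivity) hdecay.2

lemma mulVec_inv_one_sub_mulVec {n R : Type*} [Fintype n] [DecidableEq n] [CommRing R]
    {P : Matrix n n R} (hP : IsUnit (1 - P)) (v : n → R) :
    P *ᵥ ((1 - P)⁻¹ *ᵥ v) = (1 - P)⁻¹ *ᵥ v - v := by
  have hv : (1 - P) *ᵥ ((1 - P)⁻¹ *ᵥ v) = v := by
    rw [mulVec_mulVec, mul_nonsing_inv _ ((isUnit_iff_isUnit_det _).1 hP), one_mulVec]
  set w := (1 - P)⁻¹ *ᵥ v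
  rw [sub_mulVec, one_mulVec] at hv
  rw [← hv, sub_sub_cancel]

section Amat

variable {a₁ a₂ a₃ g₁ g₂ : ℝ}

lemma Amat_mulVec (w : Fin 3 → ℝ) :
    Amat a₁ a₂ a₃ g₁ g₂ *ᵥ w = ![-a₁ * w 0, g₁ * w 0 - a₂ * w 1, g₂ * w 1 - a₃ * w 2] := by
  ext i
  fin_cases i <;> simp [Amat, mulVec, dotProduct, Fin.sum_univ_three] <;> ring

lemma hasDerivAt_apply_of_Amat {x : ℝ → Fin 3 → ℝ}
    (hx : ∀ t, HasDerivAt x (Amat a₁ a₂ a₃ g₁ g₂ *ᵥ x t) t) (t : ℝ) :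
    HasDerivAt (x · 0) (-a₁ * x t 0) t ∧ HasDerivAt (x · 1) (g₁ * x t 0 - a₂ * x t 1) t ∧
      HasDerivAt (x · 2) (g₂ * x t 1 - a₃ * x t 2) t := by
  have h := hasDerivAt_pi.1 (hx t)
  rw [Amat_mulVec] at h
  exact ⟨h 0, h 1, h 2⟩

lemma mem_Icc_of_hasDerivAt_Amat {x : ℝ → Fin 3 → ℝ} {T c d : ℝ} (ha₂ : 0 < a₂) (ha₃ : 0 < a₃)
    (hg₁ : 0 < g₁) (hg₂ : 0 < g₂) (hT : 0 < T)
    (hx : ∀ t, HasDerivAt x (Amat a₁ a₂ a₃ g₁ g₂ *ᵥ x t) t)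
    (hper₁ : x T 1 = x 0 1) (hper₂ : x T 2 = x 0 2) (hx₀ : ∀ t ∈ Icc 0 T, x t 0 ∈ Icc c d) :
    ∀ t ∈ Icc 0 T, x t 1 ∈ Icc (g₁ * c / a₂) (g₁ * d / a₂) ∧
      x t 2 ∈ Icc (g₂ * (g₁ * c / a₂) / a₃) (g₂ * (g₁ * d / a₂) / a₃) := by
  have hx₁ := mem_Icc_div_of_hasDerivAt_of_periodic (h := fun t => g₁ * x t 0) ha₂ hT
    (fun t => (hasDerivAt_apply_of_Amat hx t).2.1) hper₁
    fun t ht => ⟨mul_le_mul_of_nonneg_left (hx₀ t ht).1 hg₁.le,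
      mul_le_mul_of_nonneg_left (hx₀ t ht).2 hg₁.le⟩
  have hx₂ := mem_Icc_div_of_hasDerivAt_of_periodic (h := fun t => g₂ * x t 1) ha₃ hT
    (fun t => (hasDerivAt_apply_of_Amat hx t).2.2) hper₂
    fun t ht => ⟨mul_le_mul_of_nonneg_left (hx₁ t ht).1 hg₂.le,
      mul_le_mul_of_nonneg_left (hx₁ t ht).2 hg₂.le⟩
  exact fun t ht => ⟨hx₁ t ht, hx₂ t ht⟩

lemma isUnit_one_sub_exp_smul_Amat {T : ℝ} (ha₁ : 0 < a₁) (ha₂ : 0 < a₂) (ha₃ : 0 < a₃)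
    (hg₁ : 0 < g₁) (hg₂ : 0 < g₂) (hT : 0 < T) :
    IsUnit (1 - NormedSpace.exp (T • Amat a₁ a₂ a₃ g₁ g₂)) := by
  refine mulVec_injective_iff_isUnit.1 <|
    (injective_iff_map_eq_zero (mulVecLin _)).2 fun v hv => ?_
  set x : ℝ → Fin 3 → ℝ := fun t => NormedSpace.exp (t • Amat a₁ a₂ a₃ g₁ g₂) *ᵥ v
  have hx := hasDerivAt_exp_smul_mulVec (Amat a₁ a₂ a₃ g₁ g₂) v
  have hper : x T = x 0 := by
    simp only [x, zero_smul, NormedSpace.exp_zero, one_mulVec]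
    rwa [mulVecLin_apply, sub_mulVec, one_mulVec, sub_eq_zero, eq_comm] at hv
  have hx₀ : ∀ t ∈ Icc 0 T, x t 0 ∈ Icc 0 0 := by
    simpa using mem_Icc_div_of_hasDerivAt_of_periodic (h := 0) (c := 0) (d := 0) ha₁ hT
      (fun t => ((hasDerivAt_apply_of_Amat hx t).1).congr_deriv (by simp))
      (congrFun hper 0) (by simp)
  have hv₁₂ := mem_Icc_of_hasDerivAt_Amat ha₂ ha₃ hg₁ hg₂ hT hx (congrFun hper 1)
    (congrFun hper 2) hx₀ 0 ⟨le_rfl, hT.le⟩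
  have hv₀ := hx₀ 0 ⟨le_rfl, hT.le⟩
  simp only [mul_zero, zero_div, Icc_self, mem_singleton_iff, x, zero_smul, NormedSpace.exp_zero,
    one_mulVec] at hv₁₂ hv₀
  ext i
  fin_cases i
  exacts [hv₀, hv₁₂.1, hv₁₂.2]

lemma xi_mem_Icc {T : ℝ} (ha₁ : 0 < a₁) (ha₂ : 0 < a₂) (ha₃ : 0 < a₃)
    (hg₁ : 0 < g₁) (hg₂ : 0 < g₂) (hT : 0 < T) :
    ∀ τ ∈ Icc 0 T, xi a₁ a₂ a₃ g₁ g₂ T τ ∈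
      Icc (g₁ * g₂ / (a₂ * a₃ * (Real.exp (a₁ * T) - 1)))
        (Real.exp (a₁ * T) * (g₁ * g₂ / (a₂ * a₃ * (Real.exp (a₁ * T) - 1)))) := by
  set A := Amat a₁ a₂ a₃ g₁ g₂
  set x : ℝ → Fin 3 → ℝ :=
    fun t => NormedSpace.exp (t • A) *ᵥ ((1 - NormedSpace.exp (T • A))⁻¹ *ᵥ Bvec)
  have hx := hasDerivAt_exp_smul_mulVec A ((1 - NormedSpace.exp (T • A))⁻¹ *ᵥ Bvec)
  have hjump : x T = x 0 - Bvec := by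
    simp only [x, zero_smul, NormedSpace.exp_zero, one_mulVec]
    exact mulVec_inv_one_sub_mulVec (isUnit_one_sub_exp_smul_Amat ha₁ ha₂ ha₃ hg₁ hg₂ hT) Bvec
  have hx₀ := mem_Icc_of_hasDerivAt_of_jump ha₁ hT (fun t => (hasDerivAt_apply_of_Amat hx t).1)
    (congrFun hjump 0)
  have hx₂ := mem_Icc_of_hasDerivAt_Amat ha₂ ha₃ hg₁ hg₂ hT hx
    ((congrFun hjump 1).trans (sub_zero _))
    ((congrFun hjump 2).trans (sub_zero _)) hx₀
  intro τ hτ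
  have hxi : xi a₁ a₂ a₃ g₁ g₂ T τ = x τ 2 := by simp only [xi, Cout, x, A, mulVec_mulVec]
  rw [hxi]
  convert (hx₂ τ hτ).2 using 2 <;> field_simp

end Amat

theorem sufficient_condition_exists_dose_general
    (a₁ a₂ a₃ g₁ g₂ : ℝ)
    (ha₁ : 0 < a₁) (ha₂ : 0 < a₂) (ha₃ : 0 < a₃) (hg₁ : 0 < g₁) (hg₂ : 0 < g₂)
    (ymin ymax T lamMax : ℝ)
    (hymin : 0 < ymin) (hT : 0 < T)
    (hcond1 : Real.exp (a₁ * T) * ymin < ymax)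
    (hcond2 : a₂ * a₃ / (g₁ * g₂) * ymin * (Real.exp (a₁ * T) - 1) ≤ lamMax) :
    ∃ lam ∈ Set.Icc (0 : ℝ) lamMax, ∀ τ ∈ Set.Icc (0 : ℝ) T,
      ymin ≤ lam * xi a₁ a₂ a₃ g₁ g₂ T τ ∧ lam * xi a₁ a₂ a₃ g₁ g₂ T τ ≤ ymax := by
  set L := g₁ * g₂ / (a₂ * a₃ * (Real.exp (a₁ * T) - 1))
  have hE : 0 < Real.exp (a₁ * T) - 1 := sub_pos.2 (Real.one_lt_exp_iff.2 (mul_pos ha₁ hT))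
  have hL : 0 < L := by positivity
  refine ⟨ymin / L, ⟨by positivity, ?_⟩, fun τ hτ => ?_⟩
  · calc ymin / L = a₂ * a₃ / (g₁ * g₂) * ymin * (Real.exp (a₁ * T) - 1) := by
          simp only [L]
          field_simp
      _ ≤ lamMax := hcond2
  obtain ⟨hlo, hhi⟩ := xi_mem_Icc ha₁ ha₂ ha₃ hg₁ hg₂ hT τ hτ
  constructor
  · calc ymin = ymin / L * L := (div_mul_cancel₀ _ hL.ne').symm
      _ ≤ ymin / L * xi a₁ a₂ a₃ g₁ g₂ T τ := by gcongr
  · calc ymin / L * xi a₁ a₂ a₃ g₁ g₂ T τ ≤ ymin / L * (Real.exp (a₁ * T) * L) := by gcongr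
      _ = Real.exp (a₁ * T) * ymin := by field_simp
      _ ≤ ymax := hcond1.le

/-- Corollary 2: if `e^{a₁T} ȳ_min < ȳ_max` and
`λ_max ≥ (a₂a₃/(g₁g₂)) ȳ_min (e^{a₁T} − 1)`, then some dose `λ ∈ [0, λ_max]` yields a
1-cycle of period `T` whose output stays in the corridor `[ȳ_min, ȳ_max]`. -/
theorem sufficient_condition_exists_dose
    (a₁ a₂ a₃ g₁ g₂ : ℝ)
    (ha₁ : 0 < a₁) (ha₂ : 0 < a₂) (ha₃ : 0 < a₃) (hg₁ : 0 < g₁) (hg₂ : 0 < g₂)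
    (ymin ymax T lamMax : ℝ)
    (hymin : 0 < ymin) (hminmax : ymin < ymax) (hT : 0 < T) (hlamMax : 0 < lamMax)
    (hcond1 : Real.exp (a₁ * T) * ymin < ymax)
    (hcond2 : a₂ * a₃ / (g₁ * g₂) * ymin * (Real.exp (a₁ * T) - 1) ≤ lamMax) :
    ∃ lam ∈ Set.Icc (0 : ℝ) lamMax, ∀ τ ∈ Set.Icc (0 : ℝ) T,
      ymin ≤ lam * xi a₁ a₂ a₃ g₁ g₂ T τ ∧ lam * xi a₁ a₂ a₃ g₁ g₂ T τ ≤ ymax :=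
  sufficient_condition_exists_dose_general a₁ a₂ a₃ g₁ g₂ ha₁ ha₂ ha₃ hg₁ hg₂ ymin ymax T lamMax
    hymin hT hcond1 hcond2
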